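/- Let L be the 6×5 (0,1)-matrix whose columns have supports {1,2}, {1,4}, {1,3,5}, {1,2,3,4}, {1,2,4,5} (i.e. rows (1,1,1,1,1),(1,0,0,1,1),(0,0,1,1,0),(0,1,0,1,1),(0,0,1,0,1),(0,0,0,0,0)), and let R be the 6×5 (0,1)-matrix whose columns have supports {1}, {1,2,3}, {1,2,4}, {1,4,5}, {1,2,3,4,5} (i.e. rows (1,1,1,1,1),(0,1,1,0,1),(0,1,0,0,1),(0,0,1,1,1),(0,0,0,1,1),(0,0,0,0,0)). Then there exists no inclusion dominance map for (L,R). -/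
import Mathlib


/-- The number of 1-entries of a bit-string. -/
def bitWeight {m : ℕ} (u : Fin m → Bool) : ℕ :=
  (Finset.univ.filter fun n => u n = true).card

/-- A dominance map: weight-preserving, and `L uᵀ ≤ R (f u)ᵀ` componentwise. -/
def IsDominanceMap {r m : ℕ} (L R : Fin r → Fin m → Bool)
    (f : (Fin m → Bool) → Fin m → Bool) : Prop :=
  (∀ u, bitWeight (f u) = bitWeight u) ∧
  (∀ (u : Fin m → Bool) (i : Fin r),
    (Finset.univ.filter fun n => u n = true ∧ L i n = true).card ≤
    (Finset.univ.filter fun n => f u n = true ∧ R i n = true).card)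

/-- An inclusion dominance map: a dominance map preserving componentwise inclusion. -/
def IsInclusionDominanceMap {r m : ℕ} (L R : Fin r → Fin m → Bool)
    (f : (Fin m → Bool) → Fin m → Bool) : Prop :=
  IsDominanceMap L R f ∧
  ∀ u u' : Fin m → Bool, (∀ n, u' n = true → u n = true) →
    ∀ n, f u' n = true → f u n = true

/-- The 6×5 matrix whose columns have supports {1,2}, {1,4}, {1,3,5}, {1,2,3,4}, {1,2,4,5}. -/
def L18 : Fin 6 → Fin 5 → Bool :=
  ![![true, true, true, true, true],
    ![true, false, false, true, true],
    ![false, false, true, true, false],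
    ![false, true, false, true, true],
    ![false, false, true, false, true],
    ![false, false, false, false, false]]

/-- The 6×5 matrix whose columns have supports {1}, {1,2,3}, {1,2,4}, {1,4,5}, {1,2,3,4,5}. -/
def R18 : Fin 6 → Fin 5 → Bool :=
  ![![true, true, true, true, true],
    ![false, true, true, false, true],
    ![false, true, false, false, true],
    ![false, false, true, true, true],
    ![false, false, false, true, true],
    ![false, false, false, false, false]]

/-- there exists no inclusion dominance map for `(L18, R18)`. -/
theorem stmt_18 :
    ¬ ∃ f : (Fin 5 → Bool) → Fin 5 → Bool, IsInclusionDominanceMap L18 R18 f := by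
  rintro ⟨f, ⟨⟨hw, hd⟩, hmono⟩⟩
  set u34 : Fin 5 → Bool := ![false, false, true, true, false] with hu34
  set u35 : Fin 5 → Bool := ![false, false, true, false, true] with hu35
  set u45 : Fin 5 → Bool := ![false, false, false, true, true] with hu45
  set u345 : Fin 5 → Bool := ![false, false, true, true, true] with hu345
  have key34 : ∀ v : Fin 5 → Bool, bitWeight v = bitWeight u34 →
      (∀ i : Fin 6,
        (Finset.univ.filter fun n => u34 n = true ∧ L18 i n = true).card ≤
        (Finset.univ.filter fun n => v n = true ∧ R18 i n = true).card) →
      v = ![false, true, false, false, true] := by decide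
  have key35 : ∀ v : Fin 5 → Bool, bitWeight v = bitWeight u35 →
      (∀ i : Fin 6,
        (Finset.univ.filter fun n => u35 n = true ∧ L18 i n = true).card ≤
        (Finset.univ.filter fun n => v n = true ∧ R18 i n = true).card) →
      v = ![false, false, false, true, true] := by decide
  have key45 : ∀ v : Fin 5 → Bool, bitWeight v = bitWeight u45 →
      (∀ i : Fin 6,
        (Finset.univ.filter fun n => u45 n = true ∧ L18 i n = true).card ≤
        (Finset.univ.filter fun n => v n = true ∧ R18 i n = true).card) →
      v = ![false, false, true, false, true] := by decide
  have h34 := key34 (f u34) (hw u34) (hd u34)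
  have h35 := key35 (f u35) (hw u35) (hd u35)
  have h45 := key45 (f u45) (hw u45) (hd u45)
  have m34 := hmono u345 u34 (by decide)
  have m35 := hmono u345 u35 (by decide)
  have m45 := hmono u345 u45 (by decide)
  have h1 : f u345 1 = true := m34 1 (by rw [h34]; rfl)
  have h4 : f u345 4 = true := m34 4 (by rw [h34]; rfl)
  have h3 : f u345 3 = true := m35 3 (by rw [h35]; rfl)
  have h2 : f u345 2 = true := m45 2 (by rw [h45]; rfl)
  have hw345 : bitWeight (f u345) = bitWeight u345 := hw u345
  have final : ∀ v : Fin 5 → Bool, v 1 = true → v 2 = true → v 3 = true →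
      v 4 = true → bitWeight v ≠ bitWeight u345 := by decide
  exact final (f u345) h1 h2 h3 h4 hw345
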